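/- Let n ≥ 1, μ ≥ 1, and λ_0, λ_1, …, λ_μ ∈ ℝ, with λ_d = 0 for d > μ. Let x ∈ {0,1}^n with bipolar version x̃ = 1 − 2x ∈ {−1,1}^n, let η ∈ ℝ^n, and set q_t = −Σ_{s=1}^n λ_{|t−s|} x̃_s + η_t for each t. Define f(u) = Σ_t q_t u_t + Σ_{s<t: λ_{t−s}>0} λ_{t−s}|u_t − u_s| + Σ_{s<t: λ_{t−s}<0} |λ_{t−s}| |u_t + u_s − 1|. For a subset F ⊆ {1,…,n}, let x̂ ∈ [0,1]^n be defined by x̂_t = 1/2 for t ∈ F and x̂_t = x_t for t ∉ F, and let c_F = |F| λ_0 + Σ_{t,s∈F, s<t} |λ_{t−s}|. Then f(x) − f(x̂) = (1/2)[ c_F + Σ_{t,s∈F, s<t} λ_{t−s} x̃_t x̃_s − Σ_{t∈F} η_t x̃_t ]. In particular, if c_F + Σ_{t,s∈F, s<t} λ_{t−s} x̃_t x̃_s − Σ_{t∈F} η_t x̃_t > 0, then f(x̂) < f(x), so x is not a minimizer of f over [0,1]^n. -/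

import Mathlib

/-!
Write `x = (1 - x̃)/2` with `x̃ ∈ {±1}ⁿ`. For `s < t` with `λ = λ_{t-s}`, the pair term of `f`
is `(|λ| - λ x̃_t x̃_s)/2` at `x`, while at `x̂` it is `0` if both ends lie in `F`, `|λ|/2` if
exactly one does, and unchanged otherwise. The linear term contributes
`-½ Σ_{t∈F} q_t x̃_t` to `f(x) - f(x̂)`; expanding `q` and using `x̃_t² = 1`, this is
`½ |F| λ_0 - ½ Σ_{t∈F} η_t x̃_t` plus `½ λ x̃_t x̃_s` for each pair with one end in `F` and
`λ x̃_t x̃_s` for each pair inside `F`. The one-ended pairs cancel, and each pair inside `F`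
leaves `½ (|λ| + λ x̃_t x̃_s)`.
-/

open Finset

theorem sum_sum_eq_sum_sum_lt_add_sum_diag {ι M : Type*} [Fintype ι] [LinearOrder ι]
    [AddCommMonoid M] (g : ι → ι → M) :
    ∑ t, ∑ s, g t s = (∑ t, ∑ s, if s < t then g t s + g s t else 0) + ∑ t, g t t := by
  have htrichotomy : ∀ t s, g t s =
      ((if s < t then g t s else 0) + if t < s then g t s else 0) + if t = s then g t s else 0 := by
    intro t s
    rcases lt_trichotomy s t with h | rfl | h
    · simp [h, h.asymm, h.ne']
    · simp
    · simp [h, h.asymm, h.ne]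
  have hswap : ∑ t, ∑ s, (if t < s then g t s else 0) = ∑ t, ∑ s, if s < t then g s t else 0 :=
    sum_comm
  rw [sum_congr rfl fun t _ => sum_congr rfl fun s _ => htrichotomy t s]
  simp only [sum_add_distrib, hswap, sum_ite_eq, mem_univ, if_true, ite_add_zero]

theorem sum_sum_mul_of_symm {ι R : Type*} [Fintype ι] [LinearOrder ι]
    [NonUnitalNonAssocSemiring R] (w : ι → R) (K : ι → ι → R) (hK : ∀ t s, K t s = K s t) :
    ∑ t, ∑ s, w t * K t s =
      (∑ t, ∑ s, if s < t then (w t + w s) * K t s else 0) + ∑ t, w t * K t t := by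
  rw [sum_sum_eq_sum_sum_lt_add_sum_diag]
  simp only [← hK, add_mul]

theorem sum_sum_ite_lt_mem {ι M : Type*} [Fintype ι] [LinearOrder ι] [AddCommMonoid M]
    (F : Finset ι) (h : ι → ι → M) :
    ∑ t ∈ F, ∑ s ∈ F, (if s < t then h t s else 0) =
      ∑ t, ∑ s, if s < t then (if t ∈ F ∧ s ∈ F then h t s else 0) else 0 := by
  simp only [← ite_and, and_comm (a := _ < _), and_assoc]
  simp only [ite_and, sum_ite_irrel, sum_const_zero, sum_ite_mem, univ_inter]

noncomputable def pairCost (L a b : ℝ) : ℝ :=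
  (if 0 < L then L * |a - b| else 0) + (if L < 0 then |L| * |a + b - 1| else 0)

theorem pairCost_comm (L a b : ℝ) : pairCost L a b = pairCost L b a := by
  simp only [pairCost, abs_sub_comm a b, add_comm a b]

theorem pairCost_bipolar (L : ℝ) {p r : ℝ} (hp : p = 1 ∨ p = -1) (hr : r = 1 ∨ r = -1) :
    pairCost L ((1 - p) / 2) ((1 - r) / 2) = (|L| - L * (p * r)) / 2 := by
  rcases lt_trichotomy L 0 with hL | hL | hL <;>
    rcases hp with rfl | rfl <;> rcases hr with rfl | rfl <;>
    norm_num [pairCost, hL, hL.le, hL.not_gt, abs_of_neg, abs_of_pos] <;> ring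

theorem pairCost_half_half (L : ℝ) : pairCost L (1 / 2) (1 / 2) = 0 := by
  norm_num [pairCost]

theorem pairCost_half_left (L : ℝ) {r : ℝ} (hr : r = 1 ∨ r = -1) :
    pairCost L (1 / 2) ((1 - r) / 2) = |L| / 2 := by
  rcases lt_trichotomy L 0 with hL | hL | hL <;> rcases hr with rfl | rfl <;>
    norm_num [pairCost, hL, hL.le, hL.not_gt, abs_of_neg, abs_of_pos] <;> ring

theorem pairCost_half_right (L : ℝ) {p : ℝ} (hp : p = 1 ∨ p = -1) :
    pairCost L ((1 - p) / 2) (1 / 2) = |L| / 2 := by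
  rw [pairCost_comm, pairCost_half_left L hp]

theorem pairCost_sub_pairCost_half (L : ℝ) {p r : ℝ} (hp : p = 1 ∨ p = -1) (hr : r = 1 ∨ r = -1)
    (A B : Prop) [Decidable A] [Decidable B] :
    pairCost L ((1 - p) / 2) ((1 - r) / 2)
        - pairCost L (if A then 1 / 2 else (1 - p) / 2) (if B then 1 / 2 else (1 - r) / 2)
      = (if A ∧ B then (|L| + L * (p * r)) / 2 else 0)
        - ((if A then 1 else 0) + (if B then 1 else 0)) * (L * (p * r)) / 2 := by
  by_cases hA : A <;> by_cases hB : B <;>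
    simp only [hA, hB, if_true, if_false, and_true, and_false, pairCost_bipolar L hp hr,
      pairCost_half_half, pairCost_half_left L hr, pairCost_half_right L hp] <;>
    ring

noncomputable def totalPairCost {n : ℕ} (lam : ℕ → ℝ) (u : Fin n → ℝ) : ℝ :=
  ∑ t : Fin n, ∑ s : Fin n, if s < t then pairCost (lam ((t : ℕ) - (s : ℕ))) (u t) (u s) else 0

/-- The projection `f` of the LP-relaxed detection objective, with linear coefficients `q`. -/
noncomputable def lpObjective {n : ℕ} (lam : ℕ → ℝ) (q u : Fin n → ℝ) : ℝ :=
  ∑ t, q t * u t + totalPairCost lam u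

theorem lpObjective_eq {n : ℕ} (lam : ℕ → ℝ) (q u : Fin n → ℝ) :
    lpObjective lam q u =
      (∑ t : Fin n, q t * u t)
        + (∑ t : Fin n, ∑ s : Fin n, if s < t ∧ 0 < lam ((t : ℕ) - (s : ℕ)) then
            lam ((t : ℕ) - (s : ℕ)) * |u t - u s| else 0)
        + (∑ t : Fin n, ∑ s : Fin n, if s < t ∧ lam ((t : ℕ) - (s : ℕ)) < 0 then
            |lam ((t : ℕ) - (s : ℕ))| * |u t + u s - 1| else 0) := by
  simp only [lpObjective, totalPairCost, pairCost, add_assoc, ← sum_add_distrib, ite_and,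
    ite_add_zero]

section HalfIntegralCompetitor

variable {n : ℕ} (lam : ℕ → ℝ) {p : Fin n → ℝ} (F : Finset (Fin n))

theorem sum_mul_sub_sum_mul_half (hp : ∀ t, p t = 1 ∨ p t = -1) (η q : Fin n → ℝ)
    (hq : ∀ t : Fin n, q t = -(∑ s : Fin n, lam (Nat.dist (t : ℕ) (s : ℕ)) * p s) + η t) :
    ∑ t, q t * ((1 - p t) / 2) - ∑ t, q t * (if t ∈ F then 1 / 2 else (1 - p t) / 2)
      = ((∑ t : Fin n, ∑ s : Fin n, if s < t then
            ((if t ∈ F then 1 else 0) + (if s ∈ F then 1 else 0))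
              * (lam ((t : ℕ) - (s : ℕ)) * (p t * p s)) else 0)
          + F.card * lam 0 - ∑ t ∈ F, η t * p t) / 2 := by
  set w : Fin n → ℝ := fun t => if t ∈ F then 1 else 0
  set K : Fin n → Fin n → ℝ := fun t s => lam (Nat.dist (t : ℕ) (s : ℕ)) * (p t * p s)
  have hlinear : ∑ t, q t * ((1 - p t) / 2) - ∑ t, q t * (if t ∈ F then 1 / 2 else (1 - p t) / 2)
      = (∑ t, ∑ s, w t * K t s - ∑ t, w t * (η t * p t)) / 2 := by
    rw [← sum_sub_distrib, ← sum_sub_distrib, sum_div]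
    refine sum_congr rfl fun t _ => ?_
    by_cases ht : t ∈ F
    · simp only [hq, w, K, ht, if_true, one_mul, mul_left_comm _ (p t), ← mul_sum]
      ring
    · simp [w, ht]
  have hK : ∀ t s, K t s = K s t := fun t s => by simp only [K, Nat.dist_comm, mul_comm (p t)]
  have hoffDiag : ∀ t s : Fin n, s < t → K t s = lam ((t : ℕ) - (s : ℕ)) * (p t * p s) :=
    fun t s hst => by simp only [K, Nat.dist_eq_sub_of_le_right hst.le]
  have hdiag : ∀ t, K t t = lam 0 := fun t => by rcases hp t with h | h <;> simp [K, h]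
  have hcard : ∑ t, w t * lam 0 = F.card * lam 0 := by simp [w, sum_ite_mem]
  have heta : ∑ t ∈ F, η t * p t = ∑ t, w t * (η t * p t) := by simp [w, sum_ite_mem]
  rw [hlinear, sum_sum_mul_of_symm w K hK, heta, ← hcard]
  simp only [hdiag]
  congr 3
  refine sum_congr rfl fun t _ => sum_congr rfl fun s _ => ?_
  by_cases hst : s < t
  · simp only [hst, if_true, hoffDiag t s hst, w]
  · simp only [hst, if_false]

theorem totalPairCost_sub_totalPairCost_half (hp : ∀ t, p t = 1 ∨ p t = -1) :
    totalPairCost lam (fun t => (1 - p t) / 2)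
        - totalPairCost lam (fun t => if t ∈ F then 1 / 2 else (1 - p t) / 2)
      = (∑ t ∈ F, ∑ s ∈ F, (if s < t then |lam ((t : ℕ) - (s : ℕ))| else 0)
          + ∑ t ∈ F, ∑ s ∈ F, (if s < t then lam ((t : ℕ) - (s : ℕ)) * (p t * p s) else 0)
          - ∑ t : Fin n, ∑ s : Fin n, if s < t then
            ((if t ∈ F then 1 else 0) + (if s ∈ F then 1 else 0))
              * (lam ((t : ℕ) - (s : ℕ)) * (p t * p s)) else 0) / 2 := by
  rw [sum_sum_ite_lt_mem F, sum_sum_ite_lt_mem F (fun t s => lam _ * _)]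
  simp only [totalPairCost, ← sum_sub_distrib, ← sum_add_distrib, sum_div]
  refine sum_congr rfl fun t _ => sum_congr rfl fun s _ => ?_
  by_cases hst : s < t
  · simp only [hst, if_true, pairCost_sub_pairCost_half _ (hp t) (hp s)]
    split_ifs <;> ring
  · simp [hst]

theorem lpObjective_sub_lpObjective_half (hp : ∀ t, p t = 1 ∨ p t = -1) (η q : Fin n → ℝ)
    (hq : ∀ t : Fin n, q t = -(∑ s : Fin n, lam (Nat.dist (t : ℕ) (s : ℕ)) * p s) + η t) :
    lpObjective lam q (fun t => (1 - p t) / 2)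
        - lpObjective lam q (fun t => if t ∈ F then 1 / 2 else (1 - p t) / 2)
      = (1 / 2) * ((F.card : ℝ) * lam 0
          + ∑ t ∈ F, ∑ s ∈ F, (if s < t then |lam ((t : ℕ) - (s : ℕ))| else 0)
          + ∑ t ∈ F, ∑ s ∈ F, (if s < t then lam ((t : ℕ) - (s : ℕ)) * (p t * p s) else 0)
          - ∑ t ∈ F, η t * p t) := by
  have hlinear := sum_mul_sub_sum_mul_half lam F hp η q hq
  have hpairs := totalPairCost_sub_totalPairCost_half lam F hp
  unfold lpObjective
  linear_combination hlinear + hpairs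

end HalfIntegralCompetitor

theorem lp_detection_failure_condition_general
    (n : ℕ)
    (lam : ℕ → ℝ)
    (x : Fin n → ℝ) (hx : ∀ t, x t = 0 ∨ x t = 1)
    (xt : Fin n → ℝ) (hxt : ∀ t, xt t = 1 - 2 * x t)
    (η : Fin n → ℝ)
    (q : Fin n → ℝ)
    (hq : ∀ t : Fin n, q t = -(∑ s : Fin n, lam (Nat.dist (t : ℕ) (s : ℕ)) * xt s) + η t)
    (f : (Fin n → ℝ) → ℝ)
    (hf : ∀ u : Fin n → ℝ, f u =
        (∑ t : Fin n, q t * u t)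
        + (∑ t : Fin n, ∑ s : Fin n, if s < t ∧ 0 < lam ((t : ℕ) - (s : ℕ)) then
            lam ((t : ℕ) - (s : ℕ)) * |u t - u s| else 0)
        + (∑ t : Fin n, ∑ s : Fin n, if s < t ∧ lam ((t : ℕ) - (s : ℕ)) < 0 then
            |lam ((t : ℕ) - (s : ℕ))| * |u t + u s - 1| else 0))
    (F : Finset (Fin n))
    (xhat : Fin n → ℝ) (hxhat : ∀ t, xhat t = if t ∈ F then 1/2 else x t)
    (cF : ℝ)
    (hcF : cF = (F.card : ℝ) * lam 0
        + ∑ t ∈ F, ∑ s ∈ F, (if s < t then |lam ((t : ℕ) - (s : ℕ))| else 0)) :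
    f x - f xhat = (1/2) * (cF
        + (∑ t ∈ F, ∑ s ∈ F, (if s < t then lam ((t : ℕ) - (s : ℕ)) * (xt t * xt s) else 0))
        - ∑ t ∈ F, η t * xt t) ∧
    (0 < cF
        + (∑ t ∈ F, ∑ s ∈ F, (if s < t then lam ((t : ℕ) - (s : ℕ)) * (xt t * xt s) else 0))
        - ∑ t ∈ F, η t * xt t →
      f xhat < f x ∧
      ¬ (∀ u : Fin n → ℝ, (∀ t, u t ∈ Set.Icc (0:ℝ) 1) → f x ≤ f u)) := by
  have hbipolar : ∀ t, xt t = 1 ∨ xt t = -1 := fun t => by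
    rcases hx t with h | h
    · left; rw [hxt, h]; norm_num
    · right; rw [hxt, h]; norm_num
  have hx_eq : x = fun t => (1 - xt t) / 2 := funext fun t => by rw [hxt]; ring
  have hxhat_eq : xhat = fun t => if t ∈ F then 1 / 2 else (1 - xt t) / 2 :=
    funext fun t => by rw [hxhat, hx_eq]
  have hf_eq : f = lpObjective lam q := funext fun u => by rw [hf, lpObjective_eq]
  have hdiff : f x - f xhat = (1/2) * (cF
      + (∑ t ∈ F, ∑ s ∈ F, (if s < t then lam ((t : ℕ) - (s : ℕ)) * (xt t * xt s) else 0))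
      - ∑ t ∈ F, η t * xt t) := by
    rw [hf_eq, hx_eq, hxhat_eq, hcF]
    exact lpObjective_sub_lpObjective_half lam F hbipolar η q hq
  refine ⟨hdiff, fun hpos => ?_⟩
  have hlt : f xhat < f x := by linarith
  have hxhat_mem : ∀ t, xhat t ∈ Set.Icc (0:ℝ) 1 := fun t => by
    rw [hxhat t]
    split_ifs
    · norm_num
    · rcases hx t with h | h <;> simp [h]
  exact ⟨hlt, fun hmin => (hmin xhat hxhat_mem).not_gt hlt⟩

/-- **Theorem 2 and identity (29).** For a stationary partial-response channel with
state coefficients `λ_d` (vanishing for `d > μ`), transmitted binary word `x` with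
bipolar version `x̃ = 1 − 2x`, filtered noise `η`, matched-filter outputs
`q_t = −Σ_s λ_{|t−s|} x̃_s + η_t`, projected LP objective `f`, fractional set `F`,
half-integral competitor `x̂`, and `c_F = |F| λ_0 + Σ_{t,s∈F, s<t} |λ_{t−s}|`, one has
`f(x) − f(x̂) = (1/2)[c_F + Σ_{t,s∈F,s<t} λ_{t−s} x̃_t x̃_s − Σ_{t∈F} η_t x̃_t]`;
in particular, if the bracketed quantity is positive then `f(x̂) < f(x)` and `x` does
not minimize `f` over the cube `[0,1]^n`. -/
theorem lp_detection_failure_condition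
    (n μ : ℕ) (hn : 1 ≤ n) (hμ : 1 ≤ μ)
    (lam : ℕ → ℝ) (hlam : ∀ d : ℕ, μ < d → lam d = 0)
    (x : Fin n → ℝ) (hx : ∀ t, x t = 0 ∨ x t = 1)
    (xt : Fin n → ℝ) (hxt : ∀ t, xt t = 1 - 2 * x t)
    (η : Fin n → ℝ)
    (q : Fin n → ℝ)
    (hq : ∀ t : Fin n, q t = -(∑ s : Fin n, lam (Nat.dist (t : ℕ) (s : ℕ)) * xt s) + η t)
    (f : (Fin n → ℝ) → ℝ)
    (hf : ∀ u : Fin n → ℝ, f u =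
        (∑ t : Fin n, q t * u t)
        + (∑ t : Fin n, ∑ s : Fin n, if s < t ∧ 0 < lam ((t : ℕ) - (s : ℕ)) then
            lam ((t : ℕ) - (s : ℕ)) * |u t - u s| else 0)
        + (∑ t : Fin n, ∑ s : Fin n, if s < t ∧ lam ((t : ℕ) - (s : ℕ)) < 0 then
            |lam ((t : ℕ) - (s : ℕ))| * |u t + u s - 1| else 0))
    (F : Finset (Fin n))
    (xhat : Fin n → ℝ) (hxhat : ∀ t, xhat t = if t ∈ F then 1/2 else x t)
    (cF : ℝ)
    (hcF : cF = (F.card : ℝ) * lam 0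
        + ∑ t ∈ F, ∑ s ∈ F, (if s < t then |lam ((t : ℕ) - (s : ℕ))| else 0)) :
    f x - f xhat = (1/2) * (cF
        + (∑ t ∈ F, ∑ s ∈ F, (if s < t then lam ((t : ℕ) - (s : ℕ)) * (xt t * xt s) else 0))
        - ∑ t ∈ F, η t * xt t) ∧
    (0 < cF
        + (∑ t ∈ F, ∑ s ∈ F, (if s < t then lam ((t : ℕ) - (s : ℕ)) * (xt t * xt s) else 0))
        - ∑ t ∈ F, η t * xt t →
      f xhat < f x ∧
      ¬ (∀ u : Fin n → ℝ, (∀ t, u t ∈ Set.Icc (0:ℝ) 1) → f x ≤ f u)) :=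
  lp_detection_failure_condition_general n lam x hx xt hxt η q hq f hf F xhat hxhat cF hcF
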